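/- arXiv:2005.13728 — 8 statements merged into one kernel-verified Lean document; each statement's English description precedes it below -/
import Mathlib

section
/- Let f be a real-valued function that is differentiable on an open convex set U ⊆ ℝᵈ, and suppose its gradient is L₂-Lipschitz on U for some L₂ ≥ 0. Let C ⊆ U be a cube with center x_C and radius r, and suppose x* ∈ C satisfies ∇f(x*) = 0 and f(x*) ≤ f(x) for all x ∈ C. Then f(x*) ≥ f(x_C) − (L₂/2)·r². (Validity of the qBnB(2) quasi-lower bound for unconstrained problems.) -/
/-!
Along the segment from `x*` to the centre `a` (which stays in the cube, hence in `U`), the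
derivative of `t ↦ f (x* + t (a - x*))` grows at most like `L₂ t ‖a - x*‖²` because `∇f x* = 0`.
Integrating gives the descent-lemma bound `f a ≤ f x* + L₂/2 ‖a - x*‖²`, and `‖a - x*‖ ≤ ‖h‖`
coordinatewise.
-/

open Set
open scoped RealInnerProductSpace

theorem le_add_deriv_zero_add_half_of_deriv_le {φ φ' : ℝ → ℝ} {c : ℝ}
    (hφ : ∀ t ∈ Icc (0 : ℝ) 1, HasDerivAt φ (φ' t) t)
    (hφ' : ∀ t ∈ Icc (0 : ℝ) 1, φ' t ≤ φ' 0 + c * t) :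
    φ 1 ≤ φ 0 + φ' 0 + c / 2 := by
  have hB : ∀ t, HasDerivAt (fun t => φ 0 + φ' 0 * t + c / 2 * t ^ 2) (φ' 0 + c * t) t := fun t =>
    (((hasDerivAt_id' t).const_mul (φ' 0)).const_add (φ 0)).fun_add
      ((hasDerivAt_pow 2 t).const_mul (c / 2)) |>.congr_deriv (by norm_num; ring)
  have := image_le_of_deriv_right_le_deriv_boundary
    (fun t ht => (hφ t ht).continuousAt.continuousWithinAt)
    (fun t ht => (hφ t (Ico_subset_Icc_self ht)).hasDerivWithinAt) (le_of_eq (by ring))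
    (fun t _ => (hB t).continuousAt.continuousWithinAt) (fun t _ => (hB t).hasDerivWithinAt)
    (fun t ht => hφ' t (Ico_subset_Icc_self ht)) (right_mem_Icc.2 zero_le_one)
  linarith

variable {E : Type*} [NormedAddCommGroup E] [InnerProductSpace ℝ E] [CompleteSpace E]

theorem le_add_inner_gradient_add_half_sq {f : E → ℝ} {x y : E} {L : ℝ}
    (hdiff : ∀ z ∈ segment ℝ x y, DifferentiableAt ℝ f z)
    (hLip : ∀ z ∈ segment ℝ x y, ‖gradient f z - gradient f x‖ ≤ L * ‖z - x‖) :
    f y ≤ f x + ⟪gradient f x, y - x⟫ + L / 2 * ‖y - x‖ ^ 2 := by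
  set v := y - x
  have hseg : ∀ t ∈ Icc (0 : ℝ) 1, x + t • v ∈ segment ℝ x y := fun t ht =>
    segment_eq_image' ℝ x y ▸ mem_image_of_mem _ ht
  have hφ : ∀ t ∈ Icc (0 : ℝ) 1,
      HasDerivAt (fun t : ℝ => f (x + t • v)) ⟪gradient f (x + t • v), v⟫ t := by
    intro t ht
    rw [inner_gradient_left]
    exact (hdiff _ (hseg t ht)).hasFDerivAt.comp_hasDerivAt t
      (((hasDerivAt_id t).smul_const v).const_add x |>.congr_deriv (one_smul ℝ v))
  have hφ' : ∀ t ∈ Icc (0 : ℝ) 1,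
      ⟪gradient f (x + t • v), v⟫ ≤ ⟪gradient f (x + (0 : ℝ) • v), v⟫ + L * ‖v‖ ^ 2 * t := by
    intro t ht
    rw [zero_smul, add_zero, ← sub_le_iff_le_add', ← inner_sub_left]
    calc ⟪gradient f (x + t • v) - gradient f x, v⟫
        ≤ ‖gradient f (x + t • v) - gradient f x‖ * ‖v‖ := real_inner_le_norm _ _
      _ ≤ L * ‖x + t • v - x‖ * ‖v‖ := by gcongr; exact hLip _ (hseg t ht)
      _ = L * ‖v‖ ^ 2 * t := by
        rw [add_sub_cancel_left, norm_smul, Real.norm_of_nonneg ht.1]; ring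
  have := le_add_deriv_zero_add_half_of_deriv_le hφ hφ'
  simp only [zero_smul, add_zero, one_smul, v, add_sub_cancel] at this
  linarith

theorem convex_setOf_forall_abs_sub_le {ι : Type*} (a h : EuclideanSpace ℝ ι) :
    Convex ℝ {x : EuclideanSpace ℝ ι | ∀ i, |x i - a i| ≤ h i} := by
  intro x hx y hy s t hs ht hst i
  have : (s • x + t • y) i - a i = s * (x i - a i) + t * (y i - a i) := by
    simp only [PiLp.add_apply, PiLp.smul_apply, smul_eq_mul]
    linear_combination (a i) * hst
  calc |(s • x + t • y) i - a i| ≤ s * |x i - a i| + t * |y i - a i| := by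
        rw [this]
        refine (abs_add_le _ _).trans_eq ?_
        rw [abs_mul, abs_mul, abs_of_nonneg hs, abs_of_nonneg ht]
    _ ≤ s * h i + t * h i := by gcongr; exacts [hx i, hy i]
    _ = h i := by rw [← add_mul, hst, one_mul]

theorem EuclideanSpace.norm_le_norm_of_forall_abs_le {ι : Type*} [Fintype ι]
    {v w : EuclideanSpace ℝ ι} (hvw : ∀ i, |v i| ≤ w i) : ‖v‖ ≤ ‖w‖ := by
  rw [EuclideanSpace.norm_eq, EuclideanSpace.norm_eq]
  gcongr with i
  exact (hvw i).trans (le_abs_self _)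

theorem qBnB2_quasi_lower_bound_general
    {d : ℕ} {U : Set (EuclideanSpace ℝ (Fin d))}
    (hUopen : IsOpen U)
    {f : EuclideanSpace ℝ (Fin d) → ℝ}
    (hdiff : DifferentiableOn ℝ f U)
    {L₂ : ℝ} (hL₂ : 0 ≤ L₂)
    (hLip : ∀ x ∈ U, ∀ y ∈ U, ‖gradient f x - gradient f y‖ ≤ L₂ * ‖x - y‖)
    (a h : EuclideanSpace ℝ (Fin d))
    (hCU : {x : EuclideanSpace ℝ (Fin d) | ∀ i, |x i - a i| ≤ h i} ⊆ U)
    (xstar : EuclideanSpace ℝ (Fin d))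
    (hxC : ∀ i, |xstar i - a i| ≤ h i)
    (hgrad : gradient f xstar = 0) :
    f xstar ≥ f a - L₂ / 2 * ‖h‖ ^ 2 := by
  have ha : ∀ i, |a i - a i| ≤ h i := fun i => by simpa using (abs_nonneg _).trans (hxC i)
  have hseg : segment ℝ xstar a ⊆ U :=
    ((convex_setOf_forall_abs_sub_le a h).segment_subset hxC ha).trans hCU
  have hdescent := le_add_inner_gradient_add_half_sq
    (fun z hz => hdiff.differentiableAt (hUopen.mem_nhds (hseg hz)))
    (fun z hz => hLip z (hseg hz) xstar (hseg (left_mem_segment ℝ xstar a)))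
  rw [hgrad, inner_zero_left, add_zero] at hdescent
  have hdist : ‖a - xstar‖ ≤ ‖h‖ :=
    EuclideanSpace.norm_le_norm_of_forall_abs_le fun i => by simpa [abs_sub_comm] using hxC i
  have : L₂ / 2 * ‖a - xstar‖ ^ 2 ≤ L₂ / 2 * ‖h‖ ^ 2 := by gcongr
  linarith

/-- Validity of the qBnB(2) quasi-lower bound for unconstrained problems:
if `f` is differentiable on an open convex set `U` with `L₂`-Lipschitz gradient,
`C` is a cube with center `a` and half-edge lengths `h` (radius `‖h‖`) contained in `U`,
and `x*` in `C` has vanishing gradient and minimizes `f` on `C`, then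
`f x* ≥ f a - (L₂/2) ‖h‖²`. -/
theorem qBnB2_quasi_lower_bound
    {d : ℕ} {U : Set (EuclideanSpace ℝ (Fin d))}
    (hUopen : IsOpen U) (hUconv : Convex ℝ U)
    {f : EuclideanSpace ℝ (Fin d) → ℝ}
    (hdiff : DifferentiableOn ℝ f U)
    {L₂ : ℝ} (hL₂ : 0 ≤ L₂)
    (hLip : ∀ x ∈ U, ∀ y ∈ U, ‖gradient f x - gradient f y‖ ≤ L₂ * ‖x - y‖)
    (a h : EuclideanSpace ℝ (Fin d)) (hh : ∀ i, 0 ≤ h i)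
    (hCU : {x : EuclideanSpace ℝ (Fin d) | ∀ i, |x i - a i| ≤ h i} ⊆ U)
    (xstar : EuclideanSpace ℝ (Fin d))
    (hxC : ∀ i, |xstar i - a i| ≤ h i)
    (hgrad : gradient f xstar = 0)
    (hmin : ∀ x : EuclideanSpace ℝ (Fin d), (∀ i, |x i - a i| ≤ h i) → f xstar ≤ f x) :
    f xstar ≥ f a - L₂ / 2 * ‖h‖ ^ 2 :=
  qBnB2_quasi_lower_bound_general hUopen hdiff hL₂ hLip a h hCU xstar hxC hgrad
end

section
/- Let C₀ = ∏ᵢ [aᵢ, bᵢ] ⊆ ℝᵈ and let C = ∏ᵢ [cᵢ, dᵢ] ⊆ C₀ be a sub-box satisfying dᵢ − cᵢ < bᵢ − aᵢ for every i. Define the sampled point p ∈ ℝᵈ coordinatewise by: pᵢ = cᵢ if cᵢ = aᵢ; pᵢ = dᵢ if dᵢ = bᵢ; and pᵢ = (cᵢ + dᵢ)/2 otherwise. Then for every x ∈ C there exists ε > 0 such that p + t(x − p) ∈ C₀ for all t ∈ [0, 1 + ε]; that is, the segment from p to x lies in C₀ and can be extended slightly beyond x while remaining in C₀. -/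
private lemma seg_bound {a b p q T t : ℝ} (hT : 0 < T) (ht : 0 ≤ t) (htT : t ≤ T)
    (hpa : a ≤ p) (hpb : p ≤ b) (hqa : a ≤ p + T * q) (hqb : p + T * q ≤ b) :
    a ≤ p + t * q ∧ p + t * q ≤ b := by
  constructor
  · nlinarith [mul_nonneg (sub_nonneg.2 htT) (sub_nonneg.2 hpa),
      mul_nonneg ht (sub_nonneg.2 hqa)]
  · nlinarith [mul_nonneg (sub_nonneg.2 htT) (sub_nonneg.2 hpb),
      mul_nonneg ht (sub_nonneg.2 hqb)]

private lemma eps2 {q r : ℝ} (hq : 0 ≤ q) (hr : 0 < r) : ∃ ε > 0, ε * q ≤ r := by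
  refine ⟨r / (q + r), div_pos hr (by linarith), ?_⟩
  rw [div_mul_eq_mul_div, div_le_iff₀ (by linarith)]
  nlinarith

private lemma coord_lemma (a b c d x p : ℝ) (hac : a ≤ c) (hcd : c ≤ d) (hdb : d ≤ b)
    (hs : d - c < b - a)
    (hp : p = if c = a then c else if d = b then d else (c + d) / 2)
    (hcx : c ≤ x) (hxd : x ≤ d) :
    ∃ ε > 0, ∀ t ∈ Set.Icc (0 : ℝ) (1 + ε), a ≤ p + t * (x - p) ∧ p + t * (x - p) ≤ b := by
  have hL : 0 < b - a := by nlinarith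
  have hpa : a ≤ p ∧ p ≤ b := by
    rw [hp]; split_ifs <;> constructor <;> nlinarith
  -- find ε > 0 with endpoint in [a, b]
  have hend : ∃ ε > 0, a ≤ p + (1 + ε) * (x - p) ∧ p + (1 + ε) * (x - p) ≤ b := by
    rw [hp]; split_ifs with h1 h2
    · -- c = a, p = c = a
      subst h1
      obtain ⟨ε, hε, hεq⟩ := eps2 (sub_nonneg.2 hcx) (show (0:ℝ) < b - c - (x - c) by nlinarith)
      exact ⟨ε, hε, by nlinarith [mul_nonneg (by linarith : (0:ℝ) ≤ 1 + ε) (sub_nonneg.2 hcx)],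
        by nlinarith⟩
    · -- d = b, p = d = b
      subst h2
      obtain ⟨ε, hε, hεq⟩ := eps2 (sub_nonneg.2 hxd) (show (0:ℝ) < d - a - (d - x) by nlinarith)
      exact ⟨ε, hε, by nlinarith,
        by nlinarith [mul_nonneg (by linarith : (0:ℝ) ≤ 1 + ε) (sub_nonneg.2 hxd)]⟩
    · -- midpoint
      have hca : a < c := lt_of_le_of_ne hac (fun h => h1 h.symm)
      have hdbb : d < b := lt_of_le_of_ne hdb h2
      obtain ⟨ε1, hε1, h1q⟩ := eps2 (show (0:ℝ) ≤ (d - c) / 2 by linarith) (show (0:ℝ) < b - d by linarith)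
      obtain ⟨ε2, hε2, h2q⟩ := eps2 (show (0:ℝ) ≤ (d - c) / 2 by linarith) (show (0:ℝ) < c - a by linarith)
      refine ⟨min ε1 ε2, lt_min hε1 hε2, ?_, ?_⟩
      · have hm : min ε1 ε2 * ((d - c) / 2) ≤ c - a :=
          le_trans (mul_le_mul_of_nonneg_right (min_le_right ε1 ε2) (by linarith)) h2q
        nlinarith [mul_nonneg (by positivity : (0:ℝ) ≤ 1 + min ε1 ε2)
          (show (0:ℝ) ≤ x - (c + d) / 2 + (d - c) / 2 by linarith)]
      · have hm : min ε1 ε2 * ((d - c) / 2) ≤ b - d :=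
          le_trans (mul_le_mul_of_nonneg_right (min_le_left ε1 ε2) (by linarith)) h1q
        nlinarith [mul_nonneg (by positivity : (0:ℝ) ≤ 1 + min ε1 ε2)
          (show (0:ℝ) ≤ (d - c) / 2 - (x - (c + d) / 2) by linarith)]
  obtain ⟨ε, hε, he1, he2⟩ := hend
  refine ⟨ε, hε, fun t ht => ?_⟩
  exact seg_bound (by linarith) ht.1 ht.2 hpa.1 hpa.2 he1 he2

/-- The key geometric property of the constrained-qBnB(2) sampling rule: for the
sub-box `∏ᵢ [cᵢ, dᵢ] ⊆ ∏ᵢ [aᵢ, bᵢ]` with `dᵢ - cᵢ < bᵢ - aᵢ` for all `i`, and the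
sampled point `p` (`pᵢ = cᵢ` if `cᵢ = aᵢ`, `pᵢ = dᵢ` if `dᵢ = bᵢ`, else the midpoint),
for every `x` in the sub-box the segment from `p` to `x` lies in `∏ᵢ [aᵢ, bᵢ]` and
can be extended slightly beyond `x` while remaining in it. -/
theorem constrained_qBnB2_sampling_extendable
    (n : ℕ) (a b c d p : EuclideanSpace ℝ (Fin n))
    (hac : ∀ i, a i ≤ c i) (hcd : ∀ i, c i ≤ d i) (hdb : ∀ i, d i ≤ b i)
    (hstrict : ∀ i, d i - c i < b i - a i)
    (hp : ∀ i, p i = if c i = a i then c i else if d i = b i then d i else (c i + d i) / 2)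
    (x : EuclideanSpace ℝ (Fin n)) (hx : ∀ i, c i ≤ x i ∧ x i ≤ d i) :
    ∃ ε > 0, ∀ t ∈ Set.Icc (0 : ℝ) (1 + ε), ∀ i,
      a i ≤ (p + t • (x - p)) i ∧ (p + t • (x - p)) i ≤ b i := by
  have H : ∀ i, ∃ ε > 0, ∀ t ∈ Set.Icc (0 : ℝ) (1 + ε),
      a i ≤ p i + t * (x i - p i) ∧ p i + t * (x i - p i) ≤ b i :=
    fun i => coord_lemma (a i) (b i) (c i) (d i) (x i) (p i) (hac i) (hcd i) (hdb i)
      (hstrict i) (hp i) (hx i).1 (hx i).2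
  choose f hf hF using H
  rcases Nat.eq_zero_or_pos n with hn | hn
  · refine ⟨1, one_pos, fun t _ i => ?_⟩
    exact absurd i.2 (by omega)
  · have : Nonempty (Fin n) := ⟨⟨0, hn⟩⟩
    have hne : (Finset.univ : Finset (Fin n)).Nonempty := Finset.univ_nonempty
    refine ⟨Finset.univ.inf' hne f, ?_, fun t ht i => ?_⟩
    · exact (Finset.lt_inf'_iff hne).2 fun i _ => hf i
    · have hle : Finset.univ.inf' hne f ≤ f i := Finset.inf'_le f (Finset.mem_univ i)
      have ht' : t ∈ Set.Icc (0 : ℝ) (1 + f i) := ⟨ht.1, ht.2.trans (by linarith)⟩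
      have := hF i t ht'
      simpa [PiLp.add_apply, PiLp.smul_apply, PiLp.sub_apply, smul_eq_mul] using this
end

section
/- Let C₀ = ∏ᵢ [aᵢ, bᵢ] ⊆ ℝᵈ and let C = ∏ᵢ [cᵢ, dᵢ] ⊆ C₀ be a sub-box satisfying dᵢ − cᵢ < bᵢ − aᵢ for every i. Define p ∈ ℝᵈ coordinatewise by: pᵢ = cᵢ if cᵢ = aᵢ; pᵢ = dᵢ if dᵢ = bᵢ; and pᵢ = (cᵢ + dᵢ)/2 otherwise. Let f be differentiable on an open convex set U containing C₀ with L₂-Lipschitz gradient on U (L₂ ≥ 0), and suppose x* ∈ C is a global minimizer of f over C₀. Then f(p) ≤ f(x*) + (L₂/2)·Σᵢ max{(pᵢ − cᵢ)², (pᵢ − dᵢ)²}. (Validity of the constrained-qBnB(2) quasi-lower bound.) -/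
/-!
At a minimizer `x*` of `f` over the box `C₀`, the sampled point `p` agrees with `x*` in every
coordinate where `x*` lies on the boundary of `C₀`: there `cᵢ = aᵢ` or `dᵢ = bᵢ`, and the strict
inequality `dᵢ - cᵢ < bᵢ - aᵢ` rules out the case where both hold. Hence `x* + t (p - x*)` stays
in `C₀` for all small `t` of either sign, so `⟪∇f(x*), p - x*⟫ = 0`. The descent lemma for
`L₂`-smooth functions then gives `f p ≤ f x* + (L₂/2) ‖p - x*‖²`, and `‖p - x*‖²` is bounded
coordinatewise since `x*ᵢ ∈ [cᵢ, dᵢ]`.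
-/

open Set Filter Topology

section LineRestriction

variable {E : Type*} [NormedAddCommGroup E] [NormedSpace ℝ E] {f : E → ℝ} {x v : E}

lemma DifferentiableAt.hasDerivAt_comp_add_smul {t : ℝ} (hf : DifferentiableAt ℝ f (x + t • v)) :
    HasDerivAt (fun s : ℝ => f (x + s • v)) (fderiv ℝ f (x + t • v) v) t := by
  have hline : HasDerivAt (fun s : ℝ => x + s • v) v t := by
    simpa using ((hasDerivAt_id t).smul_const v).const_add x
  exact hf.hasFDerivAt.comp_hasDerivAt t hline

lemma IsMinOn.fderiv_apply_eq_zero {s : Set E} (hmin : IsMinOn f s x)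
    (hf : DifferentiableAt ℝ f x) (hline : ∀ᶠ t in 𝓝 (0 : ℝ), x + t • v ∈ s) :
    fderiv ℝ f x v = 0 := by
  have hloc : IsLocalMin (fun t : ℝ => f (x + t • v)) 0 := by
    filter_upwards [hline] with t ht
    simpa using hmin ht
  have hf₀ : DifferentiableAt ℝ f (x + (0 : ℝ) • v) := by simpa using hf
  simpa using hloc.hasDerivAt_eq_zero hf₀.hasDerivAt_comp_add_smul

end LineRestriction

section Descent

variable {F : Type*} [NormedAddCommGroup F] [InnerProductSpace ℝ F] [CompleteSpace F]

theorem Convex.descent_lemma {U : Set F} {f : F → ℝ} {L : ℝ} {x y : F} (hUopen : IsOpen U)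
    (hU : Convex ℝ U) (hf : DifferentiableOn ℝ f U)
    (hL : ∀ z ∈ U, ‖gradient f z - gradient f x‖ ≤ L * ‖z - x‖) (hx : x ∈ U) (hy : y ∈ U) :
    f y ≤ f x + inner ℝ (gradient f x) (y - x) + L / 2 * ‖y - x‖ ^ 2 := by
  set v := y - x
  set g := gradient f x
  have hseg : ∀ t ∈ Icc (0 : ℝ) 1, x + t • v ∈ U := fun t ht => hU.add_smul_sub_mem hx hy ht
  -- The descent lemma is `φ 1 ≤ φ 0`.
  set φ : ℝ → ℝ := fun t => f (x + t • v) - t * inner ℝ g v - L / 2 * ‖v‖ ^ 2 * t ^ 2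
  have hφ : ∀ t ∈ Icc (0 : ℝ) 1,
      HasDerivAt φ (inner ℝ (gradient f (x + t • v) - g) v - L * ‖v‖ ^ 2 * t) t := by
    intro t ht
    have hline := (hf.differentiableAt (hUopen.mem_nhds (hseg t ht))).hasDerivAt_comp_add_smul
    rw [← inner_gradient_left] at hline
    have hquad := (hasDerivAt_pow 2 t).const_mul (L / 2 * ‖v‖ ^ 2)
    refine ((hline.sub ((hasDerivAt_id t).mul_const (inner ℝ g v))).sub hquad).congr_deriv ?_
    simp only [inner_sub_left, one_mul, Nat.cast_ofNat]
    ring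
  have hinner_le : ∀ t ∈ Icc (0 : ℝ) 1,
      inner ℝ (gradient f (x + t • v) - g) v ≤ L * ‖v‖ ^ 2 * t := by
    intro t ht
    calc inner ℝ (gradient f (x + t • v) - g) v
        ≤ ‖gradient f (x + t • v) - g‖ * ‖v‖ := real_inner_le_norm _ _
      _ ≤ L * ‖x + t • v - x‖ * ‖v‖ := by gcongr; exact hL _ (hseg t ht)
      _ = L * ‖v‖ ^ 2 * t := by
        rw [add_sub_cancel_left, norm_smul, Real.norm_of_nonneg ht.1]
        ring
  have hanti : AntitoneOn φ (Icc 0 1) := by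
    refine antitoneOn_of_hasDerivWithinAt_nonpos (convex_Icc 0 1)
      (fun t ht => (hφ t ht).continuousAt.continuousWithinAt)
      (fun t ht => (hφ t (interior_subset ht)).hasDerivWithinAt) fun t ht => ?_
    linarith [hinner_le t (interior_subset ht)]
  have h01 := hanti (left_mem_Icc.2 zero_le_one) (right_mem_Icc.2 zero_le_one) zero_le_one
  simp only [φ, v, one_smul, zero_smul, add_zero, add_sub_cancel, one_mul, zero_mul, sub_zero,
    one_pow, mul_one, ne_eq, OfNat.ofNat_ne_zero, not_false_eq_true, zero_pow] at h01
  linarith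

end Descent

section Box

variable {ι : Type*}

def box (a b : EuclideanSpace ℝ ι) : Set (EuclideanSpace ℝ ι) :=
  {x | ∀ i, a i ≤ x i ∧ x i ≤ b i}

lemma eventually_add_smul_mem_box [Finite ι] {a b x v : EuclideanSpace ℝ ι} (hx : x ∈ box a b)
    (hv : ∀ i, x i = a i ∨ x i = b i → v i = 0) : ∀ᶠ t in 𝓝 (0 : ℝ), x + t • v ∈ box a b := by
  simp only [box, mem_ofPred_eq, PiLp.add_apply, PiLp.smul_apply, smul_eq_mul]
  refine eventually_all.2 fun i => ?_
  by_cases hint : a i < x i ∧ x i < b i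
  · have hcont : Tendsto (fun t : ℝ => x i + t * v i) (𝓝 0) (𝓝 (x i)) := by
      simpa using ((continuous_id.mul continuous_const).const_add (x i)).tendsto (0 : ℝ)
    filter_upwards [hcont.eventually (Ioo_mem_nhds hint.1 hint.2)] with t ht
    exact ⟨ht.1.le, ht.2.le⟩
  · have hvi : v i = 0 := hv i (by
      by_contra! h
      exact hint ⟨(hx i).1.lt_of_ne h.1.symm, (hx i).2.lt_of_ne h.2⟩)
    filter_upwards with t
    simpa [hvi] using hx i

lemma norm_sub_sq_le_sum_max [Fintype ι] {c d x : EuclideanSpace ℝ ι} (p : EuclideanSpace ℝ ι)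
    (hx : x ∈ box c d) : ‖p - x‖ ^ 2 ≤ ∑ i, max ((p i - c i) ^ 2) ((p i - d i) ^ 2) := by
  rw [EuclideanSpace.real_norm_sq_eq]
  refine Finset.sum_le_sum fun i _ => ?_
  obtain ⟨hc, hd⟩ := hx i
  rw [PiLp.sub_apply]
  rcases le_total (p i) (x i) with h | h
  · exact le_max_of_le_right (by nlinarith)
  · exact le_max_of_le_left (by nlinarith)

end Box

section Sample

noncomputable def qBnBSample (a b c d : ℝ) : ℝ :=
  if c = a then c else if d = b then d else (c + d) / 2

variable {a b c d : ℝ}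

lemma qBnBSample_mem_Icc (hcd : c ≤ d) : qBnBSample a b c d ∈ Icc c d := by
  unfold qBnBSample
  split_ifs <;> constructor <;> linarith

lemma qBnBSample_eq_of_boundary {x : ℝ} (hac : a ≤ c) (hdb : d ≤ b) (hstrict : d - c < b - a)
    (hx : x ∈ Icc c d) (hbd : x = a ∨ x = b) : qBnBSample a b c d = x := by
  rcases hbd with rfl | rfl
  · rw [qBnBSample, if_pos (le_antisymm hx.1 hac)]
    exact le_antisymm hx.1 hac
  · have hd : d = x := le_antisymm hdb hx.2
    have hc : c ≠ a := by rintro rfl; linarith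
    rw [qBnBSample, if_neg hc, if_pos hd, hd]

end Sample

theorem constrained_qBnB2_quasi_lower_bound_general
    (n : ℕ) (a b c d p : EuclideanSpace ℝ (Fin n))
    (hac : ∀ i, a i ≤ c i) (hdb : ∀ i, d i ≤ b i)
    (hstrict : ∀ i, d i - c i < b i - a i)
    (hp : ∀ i, p i = if c i = a i then c i else if d i = b i then d i else (c i + d i) / 2)
    {U : Set (EuclideanSpace ℝ (Fin n))} (hUopen : IsOpen U) (hUconv : Convex ℝ U)
    (hC₀U : {x : EuclideanSpace ℝ (Fin n) | ∀ i, a i ≤ x i ∧ x i ≤ b i} ⊆ U)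
    {f : EuclideanSpace ℝ (Fin n) → ℝ} (hdiff : DifferentiableOn ℝ f U)
    {L₂ : ℝ} (hL₂ : 0 ≤ L₂)
    (hLip : ∀ x ∈ U, ∀ y ∈ U, ‖gradient f x - gradient f y‖ ≤ L₂ * ‖x - y‖)
    (xstar : EuclideanSpace ℝ (Fin n))
    (hxC : ∀ i, c i ≤ xstar i ∧ xstar i ≤ d i)
    (hmin : ∀ x : EuclideanSpace ℝ (Fin n), (∀ i, a i ≤ x i ∧ x i ≤ b i) → f xstar ≤ f x) :
    f p ≤ f xstar + L₂ / 2 * ∑ i, max ((p i - c i) ^ 2) ((p i - d i) ^ 2) := by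
  have hxC₀ : xstar ∈ box a b := fun i => ⟨(hac i).trans (hxC i).1, (hxC i).2.trans (hdb i)⟩
  have hpC₀ : p ∈ box a b := fun i => by
    obtain ⟨hc, hd⟩ := qBnBSample_mem_Icc (a := a i) (b := b i) ((hxC i).1.trans (hxC i).2)
    rw [hp i]
    exact ⟨(hac i).trans hc, hd.trans (hdb i)⟩
  have hxU : xstar ∈ U := hC₀U hxC₀
  have horth : inner ℝ (gradient f xstar) (p - xstar) = 0 := by
    rw [inner_gradient_left]
    refine IsMinOn.fderiv_apply_eq_zero (s := box a b) (fun y hy => hmin y hy)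
      (hdiff.differentiableAt (hUopen.mem_nhds hxU))
      (eventually_add_smul_mem_box hxC₀ fun i hbd => ?_)
    rw [PiLp.sub_apply, hp i, sub_eq_zero]
    exact qBnBSample_eq_of_boundary (hac i) (hdb i) (hstrict i) (hxC i) hbd
  calc f p ≤ f xstar + inner ℝ (gradient f xstar) (p - xstar) + L₂ / 2 * ‖p - xstar‖ ^ 2 :=
        hUconv.descent_lemma hUopen hdiff (fun z hz => hLip z hz xstar hxU) hxU (hC₀U hpC₀)
    _ ≤ f xstar + L₂ / 2 * ∑ i, max ((p i - c i) ^ 2) ((p i - d i) ^ 2) := by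
        rw [horth, add_zero]
        gcongr
        exact norm_sub_sq_le_sum_max p hxC

/-- Validity of the constrained-qBnB(2) quasi-lower bound: with the sampled point `p`
of the sub-box `∏ᵢ [cᵢ, dᵢ] ⊆ ∏ᵢ [aᵢ, bᵢ]` (where `dᵢ - cᵢ < bᵢ - aᵢ` for all `i`),
if `f` has `L₂`-Lipschitz gradient on an open convex `U ⊇ ∏ᵢ [aᵢ, bᵢ]` and `x*` in the
sub-box is a global minimizer of `f` over `∏ᵢ [aᵢ, bᵢ]`, then
`f(p) ≤ f(x*) + (L₂/2)·Σᵢ max{(pᵢ - cᵢ)², (pᵢ - dᵢ)²}`. -/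
theorem constrained_qBnB2_quasi_lower_bound
    (n : ℕ) (a b c d p : EuclideanSpace ℝ (Fin n))
    (hac : ∀ i, a i ≤ c i) (hcd : ∀ i, c i ≤ d i) (hdb : ∀ i, d i ≤ b i)
    (hstrict : ∀ i, d i - c i < b i - a i)
    (hp : ∀ i, p i = if c i = a i then c i else if d i = b i then d i else (c i + d i) / 2)
    {U : Set (EuclideanSpace ℝ (Fin n))} (hUopen : IsOpen U) (hUconv : Convex ℝ U)
    (hC₀U : {x : EuclideanSpace ℝ (Fin n) | ∀ i, a i ≤ x i ∧ x i ≤ b i} ⊆ U)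
    {f : EuclideanSpace ℝ (Fin n) → ℝ} (hdiff : DifferentiableOn ℝ f U)
    {L₂ : ℝ} (hL₂ : 0 ≤ L₂)
    (hLip : ∀ x ∈ U, ∀ y ∈ U, ‖gradient f x - gradient f y‖ ≤ L₂ * ‖x - y‖)
    (xstar : EuclideanSpace ℝ (Fin n))
    (hxC : ∀ i, c i ≤ xstar i ∧ xstar i ≤ d i)
    (hmin : ∀ x : EuclideanSpace ℝ (Fin n), (∀ i, a i ≤ x i ∧ x i ≤ b i) → f xstar ≤ f x) :
    f p ≤ f xstar + L₂ / 2 * ∑ i, max ((p i - c i) ^ 2) ((p i - d i) ^ 2) :=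
  constrained_qBnB2_quasi_lower_bound_general n a b c d p hac hdb hstrict hp hUopen hUconv hC₀U
    hdiff hL₂ hLip xstar hxC hmin
end

section
/- Let r > 0, L₃ > 0, x₀ ∈ ℝᵈ, and let f̂ be twice continuously differentiable on an open set containing the closed ball B̄_{2r}(x₀), with Hessian Ĥ that is L₃-Lipschitz (in operator norm) on B̄_{2r}(x₀) and satisfies ⟨Ĥ(x)v, v⟩ ≥ 3L₃r‖v‖² for all x ∈ B̄_{2r}(x₀) and all v. Suppose x̂* ∈ B̄_r(x₀) satisfies ∇f̂(x̂*) = 0. Let (x_k) be a sequence with the given x₀ as initial point and satisfying the Newton relation Ĥ(x_k)(x_k − x_{k+1}) = ∇f̂(x_k) for all k ≥ 0. Then ‖x_k − x̂*‖ ≤ r·2^{1 − 2^k} for every k ≥ 0 (so in particular ‖x_k − x₀‖ ≤ 2r for all k), and x_k converges to x̂*. -/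
/-!
By the Newton relation, `Ĥ(x_k)(x_{k+1} - x̂*)` is minus the first-order Taylor remainder of `∇f̂`
at `x_k` evaluated at `x̂*`, of norm at most `L₃‖x_k - x̂*‖²` by the Lipschitz bound on `Ĥ`.
Coercivity of `Ĥ(x_k)` with constant `3L₃r` turns this into
`‖x_{k+1} - x̂*‖ ≤ ‖x_k - x̂*‖² / (3r)`. As long as the error is at most `r`, `x_k` stays in
`B̄_{2r}(x₀)` where these bounds hold, and the error is dominated by the solution of
`ρ_{k+1} = ρ_k² / (2r)`, `ρ₀ = r`, which decreases doubly exponentially.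
-/

open Filter Metric Topology

section Taylor

variable {E F : Type*} [NormedAddCommGroup E] [NormedSpace ℝ E]
  [NormedAddCommGroup F] [NormedSpace ℝ F]

theorem norm_sub_sub_fderiv_apply_le_of_lipschitz {g : E → F} {s : Set E} {L : ℝ}
    (hL : 0 ≤ L) (hs : Convex ℝ s) (hg : ∀ x ∈ s, DifferentiableAt ℝ g x)
    (hLip : ∀ x ∈ s, ∀ y ∈ s, ‖fderiv ℝ g x - fderiv ℝ g y‖ ≤ L * ‖x - y‖)
    {a b : E} (ha : a ∈ s) (hb : b ∈ s) :
    ‖g a - g b - fderiv ℝ g a (a - b)‖ ≤ L * ‖a - b‖ ^ 2 := by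
  have hseg : segment ℝ a b ⊆ s := hs.segment_subset ha hb
  have hbound : ∀ z ∈ segment ℝ a b, ‖fderiv ℝ g z - fderiv ℝ g a‖ ≤ L * ‖a - b‖ := fun z hz =>
    calc ‖fderiv ℝ g z - fderiv ℝ g a‖ ≤ L * ‖z - a‖ := hLip z (hseg hz) a ha
      _ ≤ L * ‖a - b‖ := by
        gcongr
        rw [← dist_eq_norm, ← dist_eq_norm, dist_comm z]
        linarith [dist_add_dist_of_mem_segment hz, dist_nonneg (x := z) (y := b)]
  calc ‖g a - g b - fderiv ℝ g a (a - b)‖ ≤ L * ‖a - b‖ * ‖a - b‖ :=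
        (convex_segment a b).norm_image_sub_le_of_norm_fderiv_le' (fun z hz => hg z (hseg hz))
          hbound (right_mem_segment ℝ a b) (left_mem_segment ℝ a b)
    _ = L * ‖a - b‖ ^ 2 := by ring

end Taylor

section Newton

variable {E : Type*} [NormedAddCommGroup E] [NormedSpace ℝ E]

theorem mul_norm_le_norm_apply_of_coercive {H : E →L[ℝ] E →L[ℝ] ℝ} {μ : ℝ}
    (hH : ∀ v, μ * ‖v‖ ^ 2 ≤ H v v) (w : E) : μ * ‖w‖ ≤ ‖H w‖ := by
  rcases (norm_nonneg w).eq_or_lt with hw | hw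
  · simp [← hw]
  refine le_of_mul_le_mul_right ?_ hw
  calc μ * ‖w‖ * ‖w‖ = μ * ‖w‖ ^ 2 := by ring
    _ ≤ H w w := hH w
    _ ≤ ‖H w w‖ := Real.le_norm_self _
    _ ≤ ‖H w‖ * ‖w‖ := (H w).le_opNorm w

theorem mul_norm_newton_step_sub_le {g : E → E →L[ℝ] ℝ} {H : E →L[ℝ] E →L[ℝ] ℝ}
    {x x' xhat : E} {μ δ : ℝ} (hH : ∀ v, μ * ‖v‖ ^ 2 ≤ H v v) (hNewton : H (x - x') = g x)
    (hcrit : g xhat = 0) (hTaylor : ‖g x - g xhat - H (x - xhat)‖ ≤ δ) :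
    μ * ‖x' - xhat‖ ≤ δ := by
  have hres : H (x' - xhat) = -(g x - g xhat - H (x - xhat)) := by
    rw [show x' - xhat = (x - xhat) - (x - x') by abel, map_sub, hNewton, hcrit]
    abel
  calc μ * ‖x' - xhat‖ ≤ ‖H (x' - xhat)‖ := mul_norm_le_norm_apply_of_coercive hH _
    _ ≤ δ := by rwa [hres, norm_neg]

end Newton

section QuadraticRate

theorem two_rpow_one_sub_two_pow_le_one (k : ℕ) : (2 : ℝ) ^ ((1 : ℝ) - 2 ^ k) ≤ 1 :=
  Real.rpow_le_one_of_one_le_of_nonpos one_le_two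
    (by linarith [one_le_pow₀ (M₀ := ℝ) one_le_two (n := k)])

theorem sq_two_rpow_one_sub_two_pow (k : ℕ) :
    ((2 : ℝ) ^ ((1 : ℝ) - 2 ^ k)) ^ 2 = 2 * (2 : ℝ) ^ ((1 : ℝ) - 2 ^ (k + 1)) := by
  rw [sq, ← Real.rpow_add two_pos, mul_comm, ← Real.rpow_add_one two_ne_zero]
  ring_nf

theorem tendsto_two_rpow_one_sub_two_pow :
    Tendsto (fun k : ℕ => (2 : ℝ) ^ ((1 : ℝ) - 2 ^ k)) atTop (𝓝 0) := by
  have h : Tendsto (fun k : ℕ => (1 : ℝ) - 2 ^ k) atTop atBot :=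
    tendsto_atBot_add_const_left _ 1
      (tendsto_neg_atTop_atBot.comp (tendsto_pow_atTop_atTop_of_one_lt one_lt_two))
  exact (tendsto_rpow_atBot_of_base_gt_one 2 one_lt_two).comp h

-- `r * 2 ^ (1 - 2 ^ k)` solves `ρ₀ = r`, `ρ_{k+1} = ρ_k ^ 2 / (2 r)`.
theorem le_mul_two_rpow_of_two_mul_le_sq {r : ℝ} (hr : 0 < r) {e : ℕ → ℝ} (he : ∀ k, 0 ≤ e k)
    (h0 : e 0 ≤ r) (hstep : ∀ k, e k ≤ r → 2 * r * e (k + 1) ≤ e k ^ 2) (k : ℕ) :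
    e k ≤ r * (2 : ℝ) ^ ((1 : ℝ) - 2 ^ k) := by
  induction k with
  | zero => simpa using h0
  | succ k ih =>
    have hk : e k ≤ r :=
      ih.trans (mul_le_of_le_one_right hr.le (two_rpow_one_sub_two_pow_le_one k))
    refine le_of_mul_le_mul_left ?_ (by positivity : 0 < 2 * r)
    calc 2 * r * e (k + 1) ≤ e k ^ 2 := hstep k hk
      _ ≤ (r * (2 : ℝ) ^ ((1 : ℝ) - 2 ^ k)) ^ 2 := pow_le_pow_left₀ (he k) ih 2
      _ = 2 * r * (r * (2 : ℝ) ^ ((1 : ℝ) - 2 ^ (k + 1))) := by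
        rw [mul_pow, sq_two_rpow_one_sub_two_pow]; ring

end QuadraticRate

/-- Convergence of the Newton iterations in qBnB(3): if `f̂` is `C²` on an open set
containing `B̄_{2r}(x₀)` with `L₃`-Lipschitz Hessian there satisfying
`⟨Ĥ(x)v, v⟩ ≥ 3L₃r‖v‖²` on `B̄_{2r}(x₀)`, `x̂* ∈ B̄_r(x₀)` is a critical point of `f̂`,
and `(x_k)` is the Newton sequence started at `x₀`
(`Ĥ(x_k)(x_k - x_{k+1}) = ∇f̂(x_k)`), then `‖x_k - x̂*‖ ≤ r·2^{1 - 2^k}` for all `k`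
(in particular `‖x_k - x₀‖ ≤ 2r`), and `x_k → x̂*`. -/
theorem newton_iterations_converge
    {d : ℕ} {x₀ : EuclideanSpace ℝ (Fin d)} {r L₃ : ℝ} (hr : 0 < r) (hL₃ : 0 < L₃)
    {V : Set (EuclideanSpace ℝ (Fin d))} (hVopen : IsOpen V)
    (hball : Metric.closedBall x₀ (2 * r) ⊆ V)
    {f : EuclideanSpace ℝ (Fin d) → ℝ} (hf : ContDiffOn ℝ 2 f V)
    (hLip : ∀ x ∈ Metric.closedBall x₀ (2 * r), ∀ y ∈ Metric.closedBall x₀ (2 * r),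
      ‖fderiv ℝ (fderiv ℝ f) x - fderiv ℝ (fderiv ℝ f) y‖ ≤ L₃ * ‖x - y‖)
    (hlow : ∀ x ∈ Metric.closedBall x₀ (2 * r), ∀ v : EuclideanSpace ℝ (Fin d),
      fderiv ℝ (fderiv ℝ f) x v v ≥ 3 * L₃ * r * ‖v‖ ^ 2)
    {xhat : EuclideanSpace ℝ (Fin d)} (hxhat : xhat ∈ Metric.closedBall x₀ r)
    (hcrit : fderiv ℝ f xhat = 0)
    (x : ℕ → EuclideanSpace ℝ (Fin d)) (hx0 : x 0 = x₀)
    (hNewton : ∀ k : ℕ, ∀ v : EuclideanSpace ℝ (Fin d),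
      fderiv ℝ (fderiv ℝ f) (x k) (x k - x (k + 1)) v = fderiv ℝ f (x k) v) :
    (∀ k : ℕ, ‖x k - xhat‖ ≤ r * (2 : ℝ) ^ ((1 : ℝ) - 2 ^ k)) ∧
    (∀ k : ℕ, ‖x k - x₀‖ ≤ 2 * r) ∧
    Filter.Tendsto x Filter.atTop (nhds xhat) := by
  have hdiff : ∀ y ∈ closedBall x₀ (2 * r), DifferentiableAt ℝ (fderiv ℝ f) y := fun y hy =>
    ((hf.fderiv_of_isOpen hVopen (by norm_num : (1 : WithTop ℕ∞) + 1 ≤ 2)).differentiableOn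
      one_ne_zero).differentiableAt (hVopen.mem_nhds (hball hy))
  have hnear : ∀ y, ‖y - xhat‖ ≤ r → y ∈ closedBall x₀ (2 * r) := fun y hy =>
    closedBall_subset_closedBall' (by linarith [mem_closedBall.1 hxhat])
      (mem_closedBall_iff_norm.2 hy)
  have herr : ∀ k, ‖x k - xhat‖ ≤ r * (2 : ℝ) ^ ((1 : ℝ) - 2 ^ k) := by
    refine le_mul_two_rpow_of_two_mul_le_sq hr (fun _ => norm_nonneg _)
      (by rwa [hx0, ← dist_eq_norm, dist_comm]) fun k hk => ?_
    have hstep : 3 * L₃ * r * ‖x (k + 1) - xhat‖ ≤ L₃ * ‖x k - xhat‖ ^ 2 :=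
      mul_norm_newton_step_sub_le (fun v => hlow _ (hnear _ hk) v)
        (ContinuousLinearMap.ext (hNewton k)) hcrit
        (norm_sub_sub_fderiv_apply_le_of_lipschitz hL₃.le (convex_closedBall _ _) hdiff hLip
          (hnear _ hk) (hnear _ (by simpa using hr.le)))
    nlinarith [norm_nonneg (x (k + 1) - xhat)]
  refine ⟨herr, fun k => ?_, ?_⟩
  · have hk := hnear _ ((herr k).trans
      (mul_le_of_le_one_right hr.le (two_rpow_one_sub_two_pow_le_one k)))
    rwa [mem_closedBall, dist_eq_norm] at hk
  · exact tendsto_iff_norm_sub_tendsto_zero.2 (squeeze_zero (fun _ => norm_nonneg _) herr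
      (by simpa using tendsto_two_rpow_one_sub_two_pow.const_mul r))
end

section
/- Let f be a real-valued function on a set S ⊆ ℝᵈ, let x₀ ∈ ℝᵈ, r ≥ 0, λ̄ ≥ 0, and define f̂(x) = f(x) + (λ̄/2)‖x − x₀‖². Suppose x* ∈ S ∩ B̄_r(x₀) satisfies f(x*) ≤ f(x) for all x ∈ S, and suppose x̂* ∈ S satisfies f̂(x̂*) ≤ f̂(x) for all x ∈ S. Then f(x̂*) ≥ f(x*) ≥ f̂(x̂*) − (λ̄/2)·r². (The qBnB(3) sandwich bound: f̂(x̂*) − (λ̄/2)r² is a valid quasi-lower bound and f(x̂*) a valid upper bound on the minimum of f.) -/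
/-- The qBnB(3) sandwich bound: with `f̂(x) = f(x) + (λ̄/2)‖x - x₀‖²` (`λ̄ ≥ 0`),
if `x* ∈ S ∩ B̄_r(x₀)` minimizes `f` over `S` and `x̂* ∈ S` minimizes `f̂` over `S`,
then `f(x̂*) ≥ f(x*) ≥ f̂(x̂*) - (λ̄/2)r²`. -/
theorem qBnB3_sandwich_bound
    {d : ℕ} {S : Set (EuclideanSpace ℝ (Fin d))}
    (f : EuclideanSpace ℝ (Fin d) → ℝ)
    (x₀ : EuclideanSpace ℝ (Fin d)) {r lam : ℝ} (hr : 0 ≤ r) (hlam : 0 ≤ lam)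
    {xstar : EuclideanSpace ℝ (Fin d)} (hxS : xstar ∈ S)
    (hxr : ‖xstar - x₀‖ ≤ r)
    (hmin : ∀ x ∈ S, f xstar ≤ f x)
    {xhat : EuclideanSpace ℝ (Fin d)} (hxhatS : xhat ∈ S)
    (hhatmin : ∀ x ∈ S,
      f xhat + lam / 2 * ‖xhat - x₀‖ ^ 2 ≤ f x + lam / 2 * ‖x - x₀‖ ^ 2) :
    f xhat ≥ f xstar ∧
      f xstar ≥ (f xhat + lam / 2 * ‖xhat - x₀‖ ^ 2) - lam / 2 * r ^ 2 := by
  refine ⟨hmin xhat hxhatS, ?_⟩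
  have h1 := hhatmin xstar hxS
  have h2 : ‖xstar - x₀‖ ^ 2 ≤ r ^ 2 := by
    have := norm_nonneg (xstar - x₀); nlinarith
  nlinarith
end

section
/- Let r ≥ 0, L₃ ≥ 0, x₀ ∈ ℝᵈ, λ₀ ∈ ℝ with λ₀ ≥ −L₃r, and set λ̄ = max{0, 5L₃r − λ₀}. Let f be a real-valued function, define f̂(x) = f(x) + (λ̄/2)‖x − x₀‖², and let x̂* ∈ B̄_r(x₀). Then f(x̂*) − ( f̂(x̂*) − (λ̄/2)r² ) = (λ̄/2)·( r² − ‖x̂* − x₀‖² ) ≤ 3L₃·r³. (Third-order convergence of qBnB(3): the gap between the sampled value and the quasi-lower bound is at most 3L₃r³.) -/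
/-- Third-order convergence of qBnB(3): with `λ̄ = max{0, 5L₃r - λ₀}`, `λ₀ ≥ -L₃r`,
`f̂(x) = f(x) + (λ̄/2)‖x - x₀‖²` and `x̂* ∈ B̄_r(x₀)`, the gap between the sampled
value and the quasi-lower bound satisfies
`f(x̂*) - (f̂(x̂*) - (λ̄/2)r²) = (λ̄/2)(r² - ‖x̂* - x₀‖²) ≤ 3L₃r³`. -/
theorem qBnB3_third_order_gap
    {d : ℕ} {r L₃ : ℝ} (hr : 0 ≤ r) (hL₃ : 0 ≤ L₃)
    (x₀ : EuclideanSpace ℝ (Fin d)) {lam₀ : ℝ} (hlam₀ : lam₀ ≥ -(L₃ * r))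
    (f : EuclideanSpace ℝ (Fin d) → ℝ)
    (xhat : EuclideanSpace ℝ (Fin d)) (hxhat : xhat ∈ Metric.closedBall x₀ r) :
    f xhat -
        ((f xhat + max 0 (5 * L₃ * r - lam₀) / 2 * ‖xhat - x₀‖ ^ 2)
          - max 0 (5 * L₃ * r - lam₀) / 2 * r ^ 2)
      = max 0 (5 * L₃ * r - lam₀) / 2 * (r ^ 2 - ‖xhat - x₀‖ ^ 2) ∧
    max 0 (5 * L₃ * r - lam₀) / 2 * (r ^ 2 - ‖xhat - x₀‖ ^ 2) ≤ 3 * L₃ * r ^ 3 := by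
  constructor
  · ring
  · have hn : 0 ≤ ‖xhat - x₀‖ := norm_nonneg _
    have hlam : max 0 (5 * L₃ * r - lam₀) ≤ 6 * L₃ * r := by
      apply max_le (by positivity); nlinarith
    have hsub : r ^ 2 - ‖xhat - x₀‖ ^ 2 ≤ r ^ 2 := by nlinarith
    have hsub0 : 0 ≤ r ^ 2 - ‖xhat - x₀‖ ^ 2 := by
      have : ‖xhat - x₀‖ ≤ r := by
        simpa [dist_eq_norm] using Metric.mem_closedBall.mp hxhat
      nlinarith
    nlinarith [le_max_left 0 (5 * L₃ * r - lam₀)]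
end

section
/- Let f be twice continuously differentiable on an open set U ⊆ ℝᵈ with Hessian H(x) that is L₃-Lipschitz (in operator norm) on U, L₃ ≥ 0, let δ > 0, and let x* ∈ U satisfy ⟨H(x*)v, v⟩ ≥ 6L₃δ·‖v‖² for all v ∈ ℝᵈ. Then for every x₀ ∈ U with ‖x₀ − x*‖ ≤ δ one has ⟨H(x₀)v, v⟩ ≥ 5L₃δ·‖v‖² for all v. In particular, for every r with 0 ≤ r ≤ δ, max{0, 5L₃r − λ_min(H(x₀))} = 0, so the qBnB(3) regularization weight λ̄ vanishes. (Key eigenvalue estimate behind the eventual exactness of qBnB(3) near a non-degenerate minimizer.) -/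
/-- Key eigenvalue estimate behind the eventual exactness of qBnB(3): if `f` is `C²`
on an open set `U` with `L₃`-Lipschitz Hessian, `δ > 0`, and
`⟨H(x*)v, v⟩ ≥ 6L₃δ‖v‖²` for all `v`, then for every `x₀ ∈ U` with `‖x₀ - x*‖ ≤ δ`
one has `⟨H(x₀)v, v⟩ ≥ 5L₃δ‖v‖²` for all `v`; in particular, for every
`0 ≤ r ≤ δ`, `max{0, 5L₃r - λ_min(H(x₀))} = 0`. -/
theorem eventual_exactness_eigenvalue_estimate
    {d : ℕ} (hd : 0 < d)
    {U : Set (EuclideanSpace ℝ (Fin d))} (hUopen : IsOpen U)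
    {f : EuclideanSpace ℝ (Fin d) → ℝ} (hf : ContDiffOn ℝ 2 f U)
    {L₃ : ℝ} (hL₃ : 0 ≤ L₃)
    (hLip : ∀ x ∈ U, ∀ y ∈ U,
      ‖fderiv ℝ (fderiv ℝ f) x - fderiv ℝ (fderiv ℝ f) y‖ ≤ L₃ * ‖x - y‖)
    {δ : ℝ} (hδ : 0 < δ)
    {xstar : EuclideanSpace ℝ (Fin d)} (hxstarU : xstar ∈ U)
    (hpos : ∀ v : EuclideanSpace ℝ (Fin d),
      fderiv ℝ (fderiv ℝ f) xstar v v ≥ 6 * L₃ * δ * ‖v‖ ^ 2)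
    {x₀ : EuclideanSpace ℝ (Fin d)} (hx₀U : x₀ ∈ U) (hclose : ‖x₀ - xstar‖ ≤ δ) :
    (∀ v : EuclideanSpace ℝ (Fin d),
      fderiv ℝ (fderiv ℝ f) x₀ v v ≥ 5 * L₃ * δ * ‖v‖ ^ 2) ∧
    (∀ r : ℝ, 0 ≤ r → r ≤ δ →
      max 0 (5 * L₃ * r -
        sInf {t : ℝ | ∃ v : EuclideanSpace ℝ (Fin d),
          ‖v‖ = 1 ∧ t = fderiv ℝ (fderiv ℝ f) x₀ v v}) = 0) := by
  have key : ∀ v : EuclideanSpace ℝ (Fin d),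
      fderiv ℝ (fderiv ℝ f) x₀ v v ≥ 5 * L₃ * δ * ‖v‖ ^ 2 := by
    intro v
    set T := fderiv ℝ (fderiv ℝ f) x₀ - fderiv ℝ (fderiv ℝ f) xstar with hT
    have hnT : ‖T‖ ≤ L₃ * δ := by
      refine le_trans (hLip x₀ hx₀U xstar hxstarU) ?_
      exact mul_le_mul_of_nonneg_left hclose hL₃
    have hb : ‖T v v‖ ≤ L₃ * δ * ‖v‖ ^ 2 := by
      calc ‖T v v‖ ≤ ‖T v‖ * ‖v‖ := (T v).le_opNorm v
        _ ≤ ‖T‖ * ‖v‖ * ‖v‖ :=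
            mul_le_mul_of_nonneg_right (T.le_opNorm v) (norm_nonneg v)
        _ ≤ (L₃ * δ) * ‖v‖ * ‖v‖ := by
            have := mul_nonneg (norm_nonneg v) (norm_nonneg v)
            nlinarith [norm_nonneg v, T.opNorm_nonneg]
        _ = L₃ * δ * ‖v‖ ^ 2 := by ring
    have hTvv : T v v = fderiv ℝ (fderiv ℝ f) x₀ v v
        - fderiv ℝ (fderiv ℝ f) xstar v v := by
      simp [hT]
    have habs : |T v v| ≤ L₃ * δ * ‖v‖ ^ 2 := by
      simpa [Real.norm_eq_abs] using hb
    have := hpos v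
    have h1 := abs_le.mp habs
    rw [hTvv] at h1
    linarith [h1.1]
  refine ⟨key, ?_⟩
  intro r hr0 hrδ
  set S := {t : ℝ | ∃ v : EuclideanSpace ℝ (Fin d),
      ‖v‖ = 1 ∧ t = fderiv ℝ (fderiv ℝ f) x₀ v v} with hS
  have hne : S.Nonempty := by
    refine ⟨fderiv ℝ (fderiv ℝ f) x₀ (EuclideanSpace.single ⟨0, hd⟩ (1:ℝ))
      (EuclideanSpace.single ⟨0, hd⟩ (1:ℝ)), ⟨_, ?_, rfl⟩⟩
    simp [EuclideanSpace.norm_single]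
  have hinf : 5 * L₃ * δ ≤ sInf S := by
    apply le_csInf hne
    rintro t ⟨v, hv1, rfl⟩
    have := key v
    rw [hv1] at this
    simpa using this
  have : 5 * L₃ * r ≤ sInf S := by
    have : 5 * L₃ * r ≤ 5 * L₃ * δ := by nlinarith
    linarith
  simp [max_eq_left, sub_nonpos.mpr this]
end

section
/- Let d ≥ 1, α ∈ ℝᵈ with αᵢ ≥ 0 for all i, θ ∈ ℝ, δ ∈ ℝ, and define f : ℝᵈ → ℝ by f(x) = Σᵢ αᵢ(1 − cos(θxᵢ)) + δ‖x‖². Then f is twice continuously differentiable, its Hessian H(x) is the diagonal map with entries H(x)ᵢᵢ = αᵢθ²·cos(θxᵢ) + 2δ, and the Hessian is Lipschitz in operator norm on ℝᵈ with constant ‖α‖₂·|θ|³: for all x, y ∈ ℝᵈ, ‖H(x) − H(y)‖_op ≤ ‖α‖₂|θ|³·‖x − y‖. (The Hessian-Lipschitz constant L₃ for the generalized Rastrigin function.) -/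
/-!
The function is separable, `f x = ∑ i, φᵢ (x i)` with `φᵢ t = αᵢ (1 - cos (θ t)) + δ t²`, so its
Hessian is the diagonal bilinear form with entries `φᵢ'' (x i)`. By Cauchy–Schwarz a diagonal form
has operator norm at most its largest entry in absolute value, and since `cos` is 1-Lipschitz,
`|φᵢ'' (x i) - φᵢ'' (y i)| ≤ |αᵢ| |θ|³ |x i - y i| ≤ ‖α‖ |θ|³ ‖x - y‖`.
-/

open Real Finset

section Separable

variable {ι : Type*} [Fintype ι]

noncomputable def diagBilin (c : ι → ℝ) :
    EuclideanSpace ℝ ι →L[ℝ] EuclideanSpace ℝ ι →L[ℝ] ℝ :=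
  ∑ i, c i • (EuclideanSpace.proj i : EuclideanSpace ℝ ι →L[ℝ] ℝ).smulRight
    (EuclideanSpace.proj i : EuclideanSpace ℝ ι →L[ℝ] ℝ)

@[simp]
lemma diagBilin_apply (c : ι → ℝ) (v w : EuclideanSpace ℝ ι) :
    diagBilin c v w = ∑ i, c i * v i * w i := by
  simp only [diagBilin, _root_.sum_apply, smul_apply,
    ContinuousLinearMap.smulRight_apply, PiLp.proj_apply, smul_eq_mul, mul_assoc]

lemma diagBilin_sub (c c' : ι → ℝ) : diagBilin c - diagBilin c' = diagBilin (c - c') := by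
  ext v w
  simp only [sub_apply, diagBilin_apply, Pi.sub_apply, ← sum_sub_distrib, sub_mul]

lemma sum_abs_mul_abs_le_norm_mul_norm (v w : EuclideanSpace ℝ ι) :
    ∑ i, |v i| * |w i| ≤ ‖v‖ * ‖w‖ := by
  simpa only [sq_abs, ← EuclideanSpace.real_norm_sq_eq, sqrt_sq (norm_nonneg _)] using
    Real.sum_mul_le_sqrt_mul_sqrt univ (fun i => |v i|) (fun i => |w i|)

lemma norm_diagBilin_le {c : ι → ℝ} {K : ℝ} (hK : 0 ≤ K) (hc : ∀ i, |c i| ≤ K) :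
    ‖diagBilin c‖ ≤ K := by
  refine ContinuousLinearMap.opNorm_le_bound₂ _ hK fun v w => ?_
  calc ‖diagBilin c v w‖ = |∑ i, c i * v i * w i| := by rw [diagBilin_apply, norm_eq_abs]
    _ ≤ ∑ i, |c i| * (|v i| * |w i|) := by
        simpa only [abs_mul, mul_assoc] using abs_sum_le_sum_abs (fun i => c i * v i * w i) univ
    _ ≤ ∑ i, K * (|v i| * |w i|) := by gcongr with i; exact hc i
    _ ≤ K * ‖v‖ * ‖w‖ := by
        rw [← mul_sum, mul_assoc]; gcongr; exact sum_abs_mul_abs_le_norm_mul_norm v w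

lemma HasDerivAt.comp_euclideanSpace_apply {φ : ℝ → ℝ} {φ' : ℝ} {x : EuclideanSpace ℝ ι} {i : ι}
    (h : HasDerivAt φ φ' (x i)) :
    HasFDerivAt (fun y : EuclideanSpace ℝ ι => φ (y i))
      (φ' • (EuclideanSpace.proj i : EuclideanSpace ℝ ι →L[ℝ] ℝ)) x :=
  h.comp_hasFDerivAt x (EuclideanSpace.proj (𝕜 := ℝ) i).hasFDerivAt

variable {φ φ' φ'' : ι → ℝ → ℝ}

lemma fderiv_sum_comp_apply (hφ : ∀ i t, HasDerivAt (φ i) (φ' i t) t) :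
    fderiv ℝ (fun x : EuclideanSpace ℝ ι => ∑ i, φ i (x i))
      = fun x => ∑ i, φ' i (x i) • (EuclideanSpace.proj i : EuclideanSpace ℝ ι →L[ℝ] ℝ) :=
  funext fun x =>
    (HasFDerivAt.fun_sum fun i _ => (hφ i (x i)).comp_euclideanSpace_apply).fderiv

lemma fderiv_fderiv_sum_comp_apply (hφ : ∀ i t, HasDerivAt (φ i) (φ' i t) t)
    (hφ' : ∀ i t, HasDerivAt (φ' i) (φ'' i t) t) (x : EuclideanSpace ℝ ι) :
    fderiv ℝ (fderiv ℝ fun x : EuclideanSpace ℝ ι => ∑ i, φ i (x i)) x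
      = diagBilin fun i => φ'' i (x i) := by
  rw [fderiv_sum_comp_apply hφ]
  refine (HasFDerivAt.fun_sum fun i _ =>
    (hφ' i (x i)).comp_euclideanSpace_apply.smul_const _).fderiv.trans ?_
  ext v w
  simp only [diagBilin_apply, _root_.sum_apply, ContinuousLinearMap.smulRight_apply,
    smul_apply, PiLp.proj_apply, smul_eq_mul]

lemma contDiff_sum_comp_apply {n : WithTop ℕ∞} (hφ : ∀ i, ContDiff ℝ n (φ i)) :
    ContDiff ℝ n fun x : EuclideanSpace ℝ ι => ∑ i, φ i (x i) :=
  ContDiff.sum fun i _ => (hφ i).comp (EuclideanSpace.proj (𝕜 := ℝ) i).contDiff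

end Separable

section Rastrigin

variable (a θ δ : ℝ)

lemma hasDerivAt_rastrigin_term (t : ℝ) :
    HasDerivAt (fun t => a * (1 - cos (θ * t)) + δ * t ^ 2)
      (a * θ * sin (θ * t) + 2 * δ * t) t :=
  (((((hasDerivAt_id' t).const_mul θ).cos.const_sub 1).const_mul a).add
    ((hasDerivAt_pow 2 t).const_mul δ)).congr_deriv (by push_cast; ring)

lemma hasDerivAt_rastrigin_term_deriv (t : ℝ) :
    HasDerivAt (fun t => a * θ * sin (θ * t) + 2 * δ * t)
      (a * θ ^ 2 * cos (θ * t) + 2 * δ) t :=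
  ((((hasDerivAt_id' t).const_mul θ).sin.const_mul (a * θ)).add
    ((hasDerivAt_id' t).const_mul (2 * δ))).congr_deriv (by ring)

lemma abs_rastrigin_curvature_sub_le (s t : ℝ) :
    |(a * θ ^ 2 * cos (θ * s) + 2 * δ) - (a * θ ^ 2 * cos (θ * t) + 2 * δ)|
      ≤ |a| * |θ| ^ 3 * |s - t| :=
  calc |(a * θ ^ 2 * cos (θ * s) + 2 * δ) - (a * θ ^ 2 * cos (θ * t) + 2 * δ)|
      = |a| * |θ| ^ 2 * |cos (θ * s) - cos (θ * t)| := by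
        rw [add_sub_add_right_eq_sub, ← mul_sub, abs_mul, abs_mul, abs_pow]
    _ ≤ |a| * |θ| ^ 2 * |θ * s - θ * t| :=
        mul_le_mul_of_nonneg_left (abs_cos_sub_cos_le _ _) (by positivity)
    _ = |a| * |θ| ^ 3 * |s - t| := by rw [← mul_sub, abs_mul]; ring

end Rastrigin

theorem rastrigin_hessian_lipschitz_general
    {n : ℕ}
    (α : EuclideanSpace ℝ (Fin n)) (θ δ : ℝ)
    (f : EuclideanSpace ℝ (Fin n) → ℝ)
    (hf : ∀ x : EuclideanSpace ℝ (Fin n),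
      f x = ∑ i, α i * (1 - Real.cos (θ * x i)) + δ * ‖x‖ ^ 2) :
    ContDiff ℝ 2 f ∧
    (∀ x v w : EuclideanSpace ℝ (Fin n),
      fderiv ℝ (fderiv ℝ f) x v w
        = ∑ i, (α i * θ ^ 2 * Real.cos (θ * x i) + 2 * δ) * v i * w i) ∧
    (∀ x y : EuclideanSpace ℝ (Fin n),
      ‖fderiv ℝ (fderiv ℝ f) x - fderiv ℝ (fderiv ℝ f) y‖
        ≤ ‖α‖ * |θ| ^ 3 * ‖x - y‖) := by
  have hf_sum : f = fun x => ∑ i, (α i * (1 - cos (θ * x i)) + δ * x i ^ 2) := by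
    ext x
    rw [hf, EuclideanSpace.real_norm_sq_eq, mul_sum, sum_add_distrib]
  have hessian (x : EuclideanSpace ℝ (Fin n)) :
      fderiv ℝ (fderiv ℝ f) x = diagBilin fun i => α i * θ ^ 2 * cos (θ * x i) + 2 * δ :=
    hf_sum ▸ fderiv_fderiv_sum_comp_apply (fun i => hasDerivAt_rastrigin_term (α i) θ δ)
      (fun i => hasDerivAt_rastrigin_term_deriv (α i) θ δ) x
  refine ⟨hf_sum ▸ contDiff_sum_comp_apply
      (φ := fun i t => α i * (1 - cos (θ * t)) + δ * t ^ 2) fun i => by fun_prop,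
    fun x v w => by rw [hessian, diagBilin_apply], fun x y => ?_⟩
  rw [hessian, hessian, diagBilin_sub]
  refine norm_diagBilin_le (by positivity) fun i => ?_
  calc _ ≤ |α i| * |θ| ^ 3 * |x i - y i| := abs_rastrigin_curvature_sub_le _ _ _ _ _
    _ ≤ ‖α‖ * |θ| ^ 3 * ‖x - y‖ := by
        gcongr
        · exact PiLp.norm_apply_le α i
        · exact PiLp.norm_apply_le (x - y) i

/-- The Hessian-Lipschitz constant `L₃ = ‖α‖₂|θ|³` for the generalized Rastrigin
function `f(x) = Σᵢ αᵢ(1 - cos(θxᵢ)) + δ‖x‖²`: `f` is `C²`, its Hessian is the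
diagonal bilinear form with entries `αᵢθ²cos(θxᵢ) + 2δ`, and the Hessian is
Lipschitz in operator norm with constant `‖α‖₂|θ|³`. -/
theorem rastrigin_hessian_lipschitz
    {n : ℕ} (hn : 1 ≤ n)
    (α : EuclideanSpace ℝ (Fin n)) (hα : ∀ i, 0 ≤ α i) (θ δ : ℝ)
    (f : EuclideanSpace ℝ (Fin n) → ℝ)
    (hf : ∀ x : EuclideanSpace ℝ (Fin n),
      f x = ∑ i, α i * (1 - Real.cos (θ * x i)) + δ * ‖x‖ ^ 2) :
    ContDiff ℝ 2 f ∧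
    (∀ x v w : EuclideanSpace ℝ (Fin n),
      fderiv ℝ (fderiv ℝ f) x v w
        = ∑ i, (α i * θ ^ 2 * Real.cos (θ * x i) + 2 * δ) * v i * w i) ∧
    (∀ x y : EuclideanSpace ℝ (Fin n),
      ‖fderiv ℝ (fderiv ℝ f) x - fderiv ℝ (fderiv ℝ f) y‖
        ≤ ‖α‖ * |θ| ^ 3 * ‖x - y‖) :=
  rastrigin_hessian_lipschitz_general α θ δ f hf
end
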